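/- Let X be a C¹ vector field on a compact Riemannian manifold M with flow X_t, and let Λ be a compact invariant set with a continuous DX_t-invariant subbundle F of T_Λ M with dim F ≥ 2 that is sectionally expanding: there are K, λ > 0 with |det(DX_t(p)|_L)| ≥ K e^{λ t} for all p ∈ Λ, t ≥ 0, and all two-dimensional subspaces L ⊆ F_p. Then for every p ∈ Λ and t ≥ 0, |det(DX_t(p)|_{F_p})| ≥ K' e^{λ' t} for some constants K', λ' > 0 depending only on K, λ, and dim F. -/

import Mathlib

open Matrix

/-- The absolute value of the determinant (volume expansion factor) of a linear map `T`
on the subspace spanned by a family `b`, computed, via the Gram determinant of the image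
family, with respect to the Euclidean inner products; when `b` is an orthonormal family
spanning a subspace `L`, this equals `|det (T|_L)|`. -/
noncomputable def absDetOn {d m : ℕ} (T : (Fin d → ℝ) →L[ℝ] (Fin d → ℝ))
    (b : Fin m → Fin d → ℝ) : ℝ :=
  Real.sqrt ((Matrix.of fun i j : Fin m => dotProduct (T (b i)) (T (b j))).det)

/-- An orthonormal family for the Euclidean inner product. -/
def IsOrthonormalFamily {d : ℕ} {ι : Type*} [DecidableEq ι] (b : ι → Fin d → ℝ) : Prop :=
  ∀ i j, dotProduct (b i) (b j) = if i = j then (1 : ℝ) else 0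

theorem sum_dot_left' {d : ℕ} {ι : Type*} [Fintype ι] (f : ι → Fin d → ℝ) (w : Fin d → ℝ) :
    dotProduct (∑ k, f k) w = ∑ k, dotProduct (f k) w := by
  simp only [dotProduct, Finset.sum_apply, Finset.sum_mul]
  exact Finset.sum_comm

theorem dot_sum_right' {d : ℕ} {ι : Type*} [Fintype ι] (w : Fin d → ℝ) (f : ι → Fin d → ℝ) :
    dotProduct w (∑ k, f k) = ∑ k, dotProduct w (f k) := by
  simp only [dotProduct, Finset.sum_apply, Finset.mul_sum]
  exact Finset.sum_comm

theorem dot_sum_sum' {d : ℕ} {ι : Type*} [Fintype ι] (a c : ι → ℝ) (u v : ι → Fin d → ℝ) :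
    dotProduct (∑ k, a k • u k) (∑ l, c l • v l)
      = ∑ k, ∑ l, a k * c l * dotProduct (u k) (v l) := by
  rw [sum_dot_left']
  refine Finset.sum_congr rfl fun k _ => ?_
  rw [dot_sum_right']
  refine Finset.sum_congr rfl fun l _ => ?_
  rw [smul_dotProduct, dotProduct_smul, smul_eq_mul, smul_eq_mul]
  ring

theorem entry_star_mul_mul' {m' : ℕ} (Um G : Matrix (Fin m') (Fin m') ℝ) (i j : Fin m') :
    (star Um * G * Um) i j = ∑ k, ∑ l, Um k i * Um l j * G k l := by
  simp only [Matrix.mul_apply, Matrix.star_apply, star_trivial, Finset.sum_mul]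
  conv_lhs => rw [Finset.sum_comm]
  refine Finset.sum_congr rfl fun k _ => Finset.sum_congr rfl fun l _ => by ring

/-- if `F` is a `DX_t`-invariant subbundle of dimension `≥ 2` over a compact
invariant set `Λ` of a flow `φ` which is sectionally expanding for the derivative cocycle
`A`, then the full determinant of the cocycle along `F` grows exponentially, with constants
depending only on `K`, `λ` and `dim F`. -/
theorem stmt_3 {M : Type*} [MetricSpace M] [CompactSpace M] {d m : ℕ}
    (φ : ℝ → M → M) (hφ0 : φ 0 = id) (hφadd : ∀ s t : ℝ, φ (s + t) = φ s ∘ φ t)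
    (hφcont : Continuous fun p : ℝ × M => φ p.1 p.2)
    (Λ : Set M) (hΛc : IsCompact Λ) (hΛinv : ∀ t : ℝ, φ t '' Λ = Λ)
    -- the derivative cocycle over the flow
    (A : ℝ → M → ((Fin d → ℝ) →L[ℝ] (Fin d → ℝ)))
    (hA0 : ∀ p, A 0 p = ContinuousLinearMap.id ℝ (Fin d → ℝ))
    (hAcoc : ∀ s t : ℝ, ∀ p ∈ Λ, A (s + t) p = (A s (φ t p)).comp (A t p))
    (hAcont : Continuous fun q : ℝ × M => A q.1 q.2)
    -- the continuous invariant subbundle F of fiber dimension m ≥ 2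
    (F : M → Submodule ℝ (Fin d → ℝ))
    (hFcont : ∀ p ∈ Λ, ∀ v ∈ F p, ∀ ε > 0, ∃ δ > 0, ∀ q ∈ Λ, dist p q < δ →
      ∃ w ∈ F q, ‖v - w‖ < ε)
    (hFinv : ∀ t : ℝ, ∀ p ∈ Λ, ∀ v ∈ F p, A t p v ∈ F (φ t p))
    (hFdim : ∀ p ∈ Λ, Module.finrank ℝ (F p) = m) (hm : 2 ≤ m)
    -- sectional expansion
    (K lam : ℝ) (hK : 0 < K) (hlam : 0 < lam)
    (hsec : ∀ p ∈ Λ, ∀ t ≥ (0 : ℝ), ∀ u v : Fin d → ℝ, u ∈ F p → v ∈ F p →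
      IsOrthonormalFamily ![u, v] → K * Real.exp (lam * t) ≤ absDetOn (A t p) ![u, v]) :
    ∃ K' > (0 : ℝ), ∃ lam' > (0 : ℝ), ∀ p ∈ Λ, ∀ t ≥ (0 : ℝ),
      ∀ b : Fin m → Fin d → ℝ, (∀ i, b i ∈ F p) → IsOrthonormalFamily b →
        K' * Real.exp (lam' * t) ≤ absDetOn (A t p) b := by
  classical
  have hm0 : 0 < m := by omega
  refine ⟨Real.sqrt (K ^ m), Real.sqrt_pos.mpr (pow_pos hK m),
    (m : ℝ) * lam / 2, by positivity, ?_⟩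
  intro p hp t ht b hb hbON
  set T : (Fin d → ℝ) →L[ℝ] (Fin d → ℝ) := A t p with hTdef
  set G : Matrix (Fin m) (Fin m) ℝ :=
    Matrix.of fun i j : Fin m => dotProduct (T (b i)) (T (b j)) with hGdef
  have hPSD : G.PosSemidef := by
    have : G = (Matrix.of fun k j => T (b j) k : Matrix (Fin d) (Fin m) ℝ)ᴴ *
        (Matrix.of fun k j => T (b j) k) := by
      ext i j
      simp [Matrix.mul_apply, Matrix.conjTranspose_apply, hGdef, dotProduct]
    rw [this]
    exact Matrix.posSemidef_conjTranspose_mul_self _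
  have hG : G.IsHermitian := hPSD.isHermitian
  set Um : Matrix (Fin m) (Fin m) ℝ := (hG.eigenvectorUnitary : Matrix (Fin m) (Fin m) ℝ)
    with hUmdef
  set μ : Fin m → ℝ := hG.eigenvalues with hμdef
  have hdiag : star Um * G * Um = Matrix.diagonal μ := by
    have := hG.conjStarAlgAut_star_eigenvectorUnitary
    rw [Unitary.conjStarAlgAut_star_apply] at this
    simpa using this
  have hUU : star Um * Um = 1 := (Unitary.mem_iff.mp hG.eigenvectorUnitary.2).1
  -- the rotated orthonormal family diagonalizing the Gram matrix
  set c : Fin m → Fin d → ℝ := fun i => ∑ k, Um k i • b k with hcdef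
  have hcF : ∀ i, c i ∈ F p := fun i =>
    Submodule.sum_mem _ fun k _ => Submodule.smul_mem _ _ (hb k)
  have hcON : ∀ i j, dotProduct (c i) (c j) = if i = j then (1:ℝ) else 0 := by
    intro i j
    rw [hcdef]
    simp only []
    rw [dot_sum_sum']
    have h0 : ∀ k l : Fin m, Um k i * Um l j * dotProduct (b k) (b l)
        = Um k i * Um l j * (if k = l then (1:ℝ) else 0) := fun k l => by rw [hbON]
    simp only [h0, mul_ite, mul_one, mul_zero, Finset.sum_ite_eq, Finset.mem_univ, if_true]
    have h1 : ∑ k, Um k i * Um k j = (star Um * Um) i j := by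
      simp [Matrix.mul_apply, Matrix.star_apply]
    rw [h1, hUU, Matrix.one_apply]
  have hcG : ∀ i j, dotProduct (T (c i)) (T (c j)) = if i = j then μ i else 0 := by
    intro i j
    have hTc : ∀ i, T (c i) = ∑ k, Um k i • T (b k) := by
      intro i; rw [hcdef]; simp only []; rw [map_sum]
      exact Finset.sum_congr rfl fun k _ => T.map_smul _ _
    rw [hTc, hTc, dot_sum_sum']
    have h2 : ∑ k, ∑ l, Um k i * Um l j * dotProduct (T (b k)) (T (b l))
        = (star Um * G * Um) i j := by
      rw [entry_star_mul_mul']; rfl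
    rw [h2, hdiag, Matrix.diagonal_apply]
  -- sectional expansion for pairs of rotated vectors
  set cc : ℝ := K * Real.exp (lam * t) with hccdef
  have hcc : 0 < cc := by positivity
  have hμnn : ∀ i, 0 ≤ μ i := fun i => hPSD.eigenvalues_nonneg i
  have hpair : ∀ i j : Fin m, i ≠ j → cc ^ 2 ≤ μ i * μ j := by
    intro i j hij
    have hON2 : IsOrthonormalFamily ![c i, c j] := by
      intro a a'
      fin_cases a <;> fin_cases a' <;>
        simp [hcON, hij, hij.symm, Matrix.cons_val_zero, Matrix.cons_val_one, Matrix.head_cons]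
    have hle := hsec p hp t ht (c i) (c j) (hcF i) (hcF j) hON2
    have hdet2 : absDetOn (A t p) ![c i, c j] = Real.sqrt (μ i * μ j) := by
      rw [absDetOn]
      congr 1
      rw [Matrix.det_fin_two]
      simp only [Matrix.of_apply, Matrix.cons_val_zero, Matrix.cons_val_one, Matrix.head_cons]
      rw [show ((A t p) : (Fin d → ℝ) →L[ℝ] (Fin d → ℝ)) = T from rfl]
      rw [hcG, hcG, hcG, hcG]
      simp [hij, hij.symm]
    rw [hdet2] at hle
    have h3 : cc ^ 2 ≤ Real.sqrt (μ i * μ j) ^ 2 := pow_le_pow_left₀ hcc.le hle 2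
    rwa [Real.sq_sqrt (mul_nonneg (hμnn i) (hμnn j))] at h3
  have hμpos : ∀ i, 0 < μ i := by
    intro i
    obtain ⟨j, hj⟩ := Fintype.exists_ne_of_one_lt_card (by simp only [Fintype.card_fin]; omega) i
    have := hpair i j hj.symm
    nlinarith [hμnn i, hμnn j, sq_nonneg cc, pow_pos hcc 2]
  -- product of eigenvalues
  set P : ℝ := ∏ i, μ i with hPdef
  have hPpos : 0 < P := Finset.prod_pos fun i _ => hμpos i
  -- the double product identity
  have hdo : ∀ i : Fin m, ∏ j ∈ Finset.univ.erase i, (μ i * μ j)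
      = μ i ^ (m - 1) * (P / μ i) := by
    intro i
    rw [Finset.prod_mul_distrib, Finset.prod_const,
      Finset.card_erase_of_mem (Finset.mem_univ i), Finset.card_univ, Fintype.card_fin]
    congr 1
    rw [eq_div_iff (hμpos i).ne', Finset.prod_erase_mul _ _ (Finset.mem_univ i)]
  have hdp : ∏ i, ∏ j ∈ Finset.univ.erase i, (μ i * μ j) = P ^ (2 * (m - 1)) := by
    rw [Finset.prod_congr rfl fun i _ => hdo i, Finset.prod_mul_distrib, Finset.prod_pow,
      Finset.prod_div_distrib, Finset.prod_const, Finset.card_univ, Fintype.card_fin, ← hPdef]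
    rw [show P ^ m / P = P ^ (m - 1) by
      rw [div_eq_iff hPpos.ne', ← pow_succ]
      congr 1; omega]
    rw [← pow_add]
    congr 1; omega
  have hlow : (cc ^ m) ^ (2 * (m - 1)) ≤ P ^ (2 * (m - 1)) := by
    have h4 : ((cc ^ 2) ^ (m - 1)) ^ m ≤ ∏ i, ∏ j ∈ Finset.univ.erase i, (μ i * μ j) := by
      calc ((cc ^ 2) ^ (m - 1)) ^ m = ∏ _i : Fin m, (cc ^ 2) ^ (m - 1) := by
            rw [Finset.prod_const, Finset.card_univ, Fintype.card_fin]
        _ ≤ _ := by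
            refine Finset.prod_le_prod (fun i _ => by positivity) fun i _ => ?_
            calc (cc ^ 2) ^ (m - 1) = ∏ _j ∈ Finset.univ.erase i, cc ^ 2 := by
                  rw [Finset.prod_const, Finset.card_erase_of_mem (Finset.mem_univ i),
                    Finset.card_univ, Fintype.card_fin]
              _ ≤ _ := Finset.prod_le_prod (fun j _ => by positivity)
                  fun j hj => hpair i j (Finset.ne_of_mem_erase hj).symm
    calc (cc ^ m) ^ (2 * (m - 1)) = ((cc ^ 2) ^ (m - 1)) ^ m := by
          rw [← pow_mul, ← pow_mul, ← pow_mul]; congr 1; ring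
      _ ≤ ∏ i, ∏ j ∈ Finset.univ.erase i, (μ i * μ j) := h4
      _ = P ^ (2 * (m - 1)) := hdp
  have hccmP : cc ^ m ≤ P :=
    le_of_pow_le_pow_left₀ (by omega) hPpos.le hlow
  -- compute the determinant
  have hdetG : G.det = P := by
    rw [hG.det_eq_prod_eigenvalues]
    norm_num [hμdef, hPdef]
  -- conclude
  rw [absDetOn, ← hGdef, hdetG]
  rw [← Real.sqrt_sq (by positivity : (0:ℝ) ≤ Real.sqrt (K ^ m) * Real.exp ((m : ℝ) * lam / 2 * t))]
  refine Real.sqrt_le_sqrt ?_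
  have h5 : (Real.sqrt (K ^ m) * Real.exp ((m : ℝ) * lam / 2 * t)) ^ 2 = cc ^ m := by
    rw [mul_pow, Real.sq_sqrt (by positivity : (0:ℝ) ≤ K ^ m), ← Real.exp_nat_mul, hccdef,
      mul_pow, ← Real.exp_nat_mul]
    ring_nf
  calc (Real.sqrt (K ^ m) * Real.exp ((m : ℝ) * lam / 2 * t)) ^ 2 = cc ^ m := h5
    _ ≤ P := hccmP
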